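/- arXiv:1801.02061 — 5 statements merged into one kernel-verified Lean document; each statement's English description precedes it below -/
import Mathlib

section
/- For every integer N ≥ 1 and every demand d : [N] → [N], the generalized independence number and the min-rank of the induced generalized index coding problem coincide: α(d) = κ(d), and this common value equals N·N_e(d) if N_e(d) ≤ N−1, and equals N(N−1) if N_e(d) = N. -/
open Matrix

/-- Number of distinct demands `N_e(d)`. -/
def numDistinct {K N : ℕ} (d : Fin K → Fin N) : ℕ := (Finset.univ.image d).card

/-- The set `Z^{(i,j)}(d)` for the GIC problem induced by CFL prefetching (`N = K`). -/
def Zset (F : Type*) [Field F] {N : ℕ} (d : Fin N → Fin N) (i j : Fin N) :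
    Set (Matrix (Fin N) (Fin N) F) :=
  {Z | (∑ a, Z a i) = 0 ∧ Z (d i) j ≠ 0}

/-- Generalized independence number `α(d)`: the maximum dimension of a subspace
all of whose nonzero elements lie in `⋃_{i,j} Z^{(i,j)}(d)`. -/
noncomputable def alphaCFL (F : Type*) [Field F] {N : ℕ} (d : Fin N → Fin N) : ℕ :=
  sSup { k | ∃ U : Submodule F (Matrix (Fin N) (Fin N) F),
    (∀ x ∈ U, x ≠ 0 → x ∈ ⋃ i, ⋃ j, Zset F d i j) ∧ Module.finrank F U = k }

/-- The matrix `v_i` with `v_i(a,b) = 1` iff `b = i`. -/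
def vmat (F : Type*) [Field F] {N : ℕ} (i : Fin N) : Matrix (Fin N) (Fin N) F :=
  fun _ b => if b = i then 1 else 0

/-- Min-rank `κ(d)`: the minimum over all scalar choices `c` of the dimension of the
span of the matrices `E_{d(i),j} + c(i,j)·v_i`. -/
noncomputable def kappaCFL (F : Type*) [Field F] {N : ℕ} (d : Fin N → Fin N) : ℕ :=
  sInf { k | ∃ c : Fin N × Fin N → F,
    Module.finrank F (Submodule.span F
      (Set.range fun p : Fin N × Fin N =>
        Matrix.single (d p.1) p.2 (1 : F) + c p • vmat F p.1)) = k }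

/-! Pairing a matrix `x` entrywise with `E_{d(i),j} + c(i,j) v_i` gives
`x(d(i),j) + c(i,j) ∑_a x(a,i)`, which is nonzero whenever `x ∈ Z^{(i,j)}(d)`. Hence every
admissible subspace embeds into the dual of the span of these generators, so `α(d) ≤ κ(d)`, and
it suffices to exhibit an admissible subspace and a choice of `c` of the same dimension.

If some file `t` is requested by nobody, the matrices `E_{a,b} - E_{t,b}` with `a` requested span
an admissible subspace of dimension `N·N_e`, and for `c = 0` the generators live on the `N_e`
requested rows. If `d` is a bijection, fix any row `t` and let `a` range over the other rows:
this gives dimension `N(N-1)`, while `c(i,i) = -1` turns `E_{d(i),i} - v_i` into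
`-∑_{i' ≠ i} E_{d(i'),i}`, so all generators vanish at the `N` positions `(d(i),i)`. -/

open Module Submodule Finset

section Pairing

variable {F V W ι : Type*} [Field F] [AddCommGroup V] [Module F V] [AddCommGroup W] [Module F W]

theorem finrank_le_finrank_span_of_pairing [Finite ι] (B : V →ₗ[F] W →ₗ[F] F) (G : ι → W)
    (U : Submodule F V) (hU : ∀ u ∈ U, u ≠ 0 → ∃ i, B u (G i) ≠ 0) :
    finrank F U ≤ finrank F (span F (Set.range G)) := by
  set S := span F (Set.range G)
  have : Module.Finite F S := Module.Finite.span_of_finite F (Set.finite_range G)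
  let restrict : U →ₗ[F] Module.Dual F S :=
    (LinearMap.lcomp F F S.subtype).comp (B.domRestrict U)
  have hinj : Function.Injective restrict := by
    rw [← LinearMap.ker_eq_bot, LinearMap.ker_eq_bot']
    intro u hu
    by_contra hne
    obtain ⟨i, hi⟩ := hU u u.2 (by simpa using hne)
    exact hi (LinearMap.congr_fun hu ⟨G i, subset_span (Set.mem_range_self i)⟩)
  calc finrank F U ≤ finrank F (Module.Dual F S) :=
        LinearMap.finrank_le_finrank_of_injective hinj
    _ = finrank F S := Subspace.dual_finrank_eq

end Pairing

section MatrixSpans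

variable {F : Type*} [Field F] {m n : Type*} [Fintype n] [DecidableEq m] [DecidableEq n]

theorem stdBasis_toDual_single [Fintype m] (x : Matrix m n F) (a : m) (b : n) :
    (stdBasis F m n).toDual x (single a b 1) = x a b := by
  rw [← stdBasis_eq_single, Module.Basis.toDual_apply_left]
  simp [stdBasis]

theorem finrank_span_le_card_of_support_subset [Fintype m] {ι : Type*} (P : Finset (m × n))
    (G : ι → Matrix m n F) (hG : ∀ k a b, G k a b ≠ 0 → (a, b) ∈ P) :
    finrank F (span F (Set.range G)) ≤ P.card := by
  let E : P → Matrix m n F := fun q => single q.1.1 q.1.2 1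
  have hle : span F (Set.range G) ≤ span F (Set.range E) := by
    rw [span_le]
    rintro _ ⟨k, rfl⟩
    rw [matrix_eq_sum_single (G k)]
    refine sum_mem fun a _ => sum_mem fun b _ => ?_
    by_cases h : G k a b = 0
    · simp [h]
    · rw [← mul_one (G k a b), ← smul_eq_mul, ← smul_single]
      exact smul_mem _ _ (subset_span ⟨⟨(a, b), hG k a b h⟩, rfl⟩)
  calc finrank F (span F (Set.range G)) ≤ finrank F (span F (Set.range E)) := finrank_mono hle
    _ ≤ Fintype.card P := finrank_range_le_card E
    _ = P.card := Fintype.card_coe P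

def singleSubSingle (A : Finset m) (t : m) (q : A × n) : Matrix m n F :=
  single (q.1 : m) q.2 1 - single t q.2 1

variable {A : Finset m} {t : m}

theorem sum_smul_singleSubSingle_apply (ht : t ∉ A) (y : A × n → F) (a : A) (b : n) :
    (∑ q, y q • singleSubSingle A t q) a b = y (a, b) := by
  have hta : t ≠ a := fun h => ht (h ▸ a.2)
  simp only [singleSubSingle, Matrix.sum_apply, Matrix.smul_apply, Matrix.sub_apply, single_apply,
    hta, false_and, if_false, sub_zero, smul_eq_mul, mul_ite, mul_one, mul_zero]
  rw [Fintype.sum_eq_single (a, b) fun q hq => if_neg fun h => hq (Prod.ext (Subtype.ext h.1) h.2)]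
  simp

theorem linearIndependent_singleSubSingle (ht : t ∉ A) :
    LinearIndependent F (singleSubSingle (F := F) (n := n) A t) :=
  Fintype.linearIndependent_iff.2 fun y hy q => by
    simpa [hy] using (sum_smul_singleSubSingle_apply ht y q.1 q.2).symm

theorem finrank_span_singleSubSingle (ht : t ∉ A) :
    finrank F (span F (Set.range (singleSubSingle (F := F) (n := n) A t))) =
      A.card * Fintype.card n := by
  rw [finrank_span_eq_card (linearIndependent_singleSubSingle ht), Fintype.card_prod,
    Fintype.card_coe]

theorem sum_apply_eq_zero_of_mem_span_singleSubSingle [Fintype m] {x : Matrix m n F}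
    (hx : x ∈ span F (Set.range (singleSubSingle A t))) (b : n) : ∑ a, x a b = 0 := by
  obtain ⟨y, rfl⟩ := (mem_span_range_iff_exists_fun F).1 hx
  simp only [Matrix.sum_apply]
  rw [Finset.sum_comm]
  refine Finset.sum_eq_zero fun q _ => ?_
  rcases eq_or_ne q.2 b with hb | hb <;>
    simp [singleSubSingle, single_apply, hb, ← Finset.mul_sum, Finset.sum_sub_distrib]

end MatrixSpans

section CFL

variable {F : Type*} [Field F] {N : ℕ} (d : Fin N → Fin N)

def cflGenerator (c : Fin N × Fin N → F) (p : Fin N × Fin N) : Matrix (Fin N) (Fin N) F :=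
  single (d p.1) p.2 1 + c p • vmat F p.1

theorem vmat_eq_sum_single (i : Fin N) : vmat F i = ∑ a, single a i (1 : F) := by
  ext a b
  rcases eq_or_ne i b with rfl | hb
  · simp [vmat, Matrix.sum_apply, single_apply]
  · simp [vmat, Matrix.sum_apply, hb, hb.symm]

theorem stdBasis_toDual_cflGenerator (c : Fin N × Fin N → F) (x : Matrix (Fin N) (Fin N) F)
    (p : Fin N × Fin N) :
    (stdBasis F _ _).toDual x (cflGenerator d c p) = x (d p.1) p.2 + c p * ∑ a, x a p.1 := by
  simp [cflGenerator, vmat_eq_sum_single, stdBasis_toDual_single]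

variable {d}

theorem finrank_le_finrank_span_cflGenerator {U : Submodule F (Matrix (Fin N) (Fin N) F)}
    (hU : ∀ x ∈ U, x ≠ 0 → x ∈ ⋃ i, ⋃ j, Zset F d i j) (c : Fin N × Fin N → F) :
    finrank F U ≤ finrank F (span F (Set.range (cflGenerator d c))) :=
  finrank_le_finrank_span_of_pairing (stdBasis F _ _).toDual _ U fun x hx hx0 => by
    obtain ⟨i, j, hcol, hentry⟩ : ∃ i j, ∑ a, x a i = 0 ∧ x (d i) j ≠ 0 := by
      simpa [Zset] using hU x hx hx0
    exact ⟨(i, j), by simpa [stdBasis_toDual_cflGenerator, hcol] using hentry⟩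

theorem alphaCFL_eq_and_kappaCFL_eq {v : ℕ} (U : Submodule F (Matrix (Fin N) (Fin N) F))
    (hU : ∀ x ∈ U, x ≠ 0 → x ∈ ⋃ i, ⋃ j, Zset F d i j) (hUv : finrank F U = v)
    (c : Fin N × Fin N → F) (hc : finrank F (span F (Set.range (cflGenerator d c))) ≤ v) :
    alphaCFL F d = v ∧ kappaCFL F d = v := by
  have hcv : finrank F (span F (Set.range (cflGenerator d c))) = v :=
    le_antisymm hc (hUv ▸ finrank_le_finrank_span_cflGenerator hU c)
  refine ⟨IsGreatest.csSup_eq ⟨⟨U, hU, hUv⟩, ?_⟩, IsLeast.csInf_eq ⟨⟨c, hcv⟩, ?_⟩⟩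
  · rintro _ ⟨U', hU', rfl⟩
    exact (finrank_le_finrank_span_cflGenerator hU' c).trans hc
  · rintro _ ⟨c', rfl⟩
    exact hUv ▸ finrank_le_finrank_span_cflGenerator hU c'

theorem mem_iUnion_Zset_of_mem_span_singleSubSingle {A : Finset (Fin N)} {t : Fin N}
    (ht : t ∉ A) (hA : ∀ a ∈ A, a ∈ Set.range d) {x : Matrix (Fin N) (Fin N) F}
    (hx : x ∈ span F (Set.range (singleSubSingle A t))) (hx0 : x ≠ 0) :
    x ∈ ⋃ i, ⋃ j, Zset F d i j := by
  have hcol := sum_apply_eq_zero_of_mem_span_singleSubSingle hx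
  obtain ⟨y, rfl⟩ := (mem_span_range_iff_exists_fun F).1 hx
  obtain ⟨q, hq⟩ : ∃ q, y q ≠ 0 := by
    by_contra! h
    exact hx0 (by simp [h])
  obtain ⟨i, hi⟩ := hA q.1 q.1.2
  simp only [Set.mem_iUnion]
  refine ⟨i, q.2, hcol i, ?_⟩
  change (∑ q, y q • singleSubSingle A t q) (d i) q.2 ≠ 0
  rwa [hi, sum_smul_singleSubSingle_apply ht]

theorem alphaCFL_eq_and_kappaCFL_eq_of_notMem_range {t : Fin N} (ht : t ∉ Set.range d) :
    alphaCFL F d = numDistinct d * N ∧ kappaCFL F d = numDistinct d * N := by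
  have htA : t ∉ univ.image d := by simpa using ht
  refine alphaCFL_eq_and_kappaCFL_eq _ (fun x hx hx0 => mem_iUnion_Zset_of_mem_span_singleSubSingle
    htA (fun a ha => by simpa using ha) hx hx0) ?_ 0 ?_
  · rw [finrank_span_singleSubSingle htA, Fintype.card_fin, numDistinct]
  · refine (finrank_span_le_card_of_support_subset (univ.image d ×ˢ univ) _
      fun p a b hab => ?_).trans ?_
    · simp only [cflGenerator, Pi.zero_apply, zero_smul, add_zero, single_apply] at hab
      simp [(ite_ne_right_iff.1 hab).1.1.symm]
    · rw [card_product, card_univ, Fintype.card_fin, numDistinct]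

theorem mem_image_offDiag_of_cflGenerator_apply_ne_zero (hd : Function.Surjective d)
    {p : Fin N × Fin N} {a b : Fin N}
    (hab : cflGenerator d (fun q => if q.2 = q.1 then (-1 : F) else 0) p a b ≠ 0) :
    (a, b) ∈ univ.offDiag.image fun q => (d q.1, q.2) := by
  simp only [cflGenerator, Matrix.add_apply, Matrix.smul_apply, vmat, single_apply] at hab
  by_cases hp : p.2 = p.1
  · obtain ⟨i, rfl⟩ := hd a
    have hb : b = p.1 := by by_contra hb; simp [hb, Ne.symm hb, hp] at hab
    have hi : i ≠ p.1 := by rintro rfl; simp [hb, hp] at hab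
    exact mem_image.2 ⟨(i, p.1), mem_offDiag.2 ⟨mem_univ _, mem_univ _, hi⟩, by rw [hb]⟩
  · simp only [hp, if_false, zero_smul, add_zero, ne_eq, ite_eq_right_iff, one_ne_zero,
      imp_false, not_not] at hab
    exact mem_image.2 ⟨p, mem_offDiag.2 ⟨mem_univ _, mem_univ _, Ne.symm hp⟩, by rw [hab.1, hab.2]⟩

theorem alphaCFL_eq_and_kappaCFL_eq_of_surjective (hN : 1 ≤ N) (hd : Function.Surjective d) :
    alphaCFL F d = (N - 1) * N ∧ kappaCFL F d = (N - 1) * N := by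
  let t : Fin N := ⟨0, hN⟩
  have htA : t ∉ univ.erase t := notMem_erase t univ
  refine alphaCFL_eq_and_kappaCFL_eq _ (fun x hx hx0 => mem_iUnion_Zset_of_mem_span_singleSubSingle
    htA (fun a _ => hd a) hx hx0) ?_ (fun p => if p.2 = p.1 then -1 else 0) ?_
  · rw [finrank_span_singleSubSingle htA, card_erase_of_mem (mem_univ t), card_univ,
      Fintype.card_fin]
  · calc _ ≤ (univ.offDiag.image fun q => (d q.1, q.2)).card :=
          finrank_span_le_card_of_support_subset _ _ fun _ _ _ hab =>
            mem_image_offDiag_of_cflGenerator_apply_ne_zero hd hab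
      _ ≤ univ.offDiag.card := card_image_le
      _ = (N - 1) * N := by rw [offDiag_card, card_univ, Fintype.card_fin, Nat.sub_one_mul]

end CFL

theorem alpha_eq_kappa_CFL_NeqK_general (F : Type*) [Field F]
    (N : ℕ) (hN : 1 ≤ N) (d : Fin N → Fin N) :
    alphaCFL F d = kappaCFL F d ∧
    (numDistinct d ≤ N - 1 → alphaCFL F d = N * numDistinct d) ∧
    (numDistinct d = N → alphaCFL F d = N * (N - 1)) := by
  by_cases hd : Function.Surjective d
  · have hNe : numDistinct d = N := by
      rw [numDistinct, image_univ_of_surjective hd, card_fin]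
    obtain ⟨hα, hκ⟩ := alphaCFL_eq_and_kappaCFL_eq_of_surjective (F := F) hN hd
    exact ⟨hα.trans hκ.symm, fun h => by omega, fun _ => hα.trans (mul_comm _ _)⟩
  · obtain ⟨t, ht⟩ := not_forall.1 hd
    have hNe : numDistinct d < N :=
      (card_lt_univ_of_notMem (x := t) (by simpa using ht)).trans_eq (card_fin N)
    obtain ⟨hα, hκ⟩ := alphaCFL_eq_and_kappaCFL_eq_of_notMem_range (F := F) ht
    exact ⟨hα.trans hκ.symm, fun _ => hα.trans (mul_comm _ _), fun h => by omega⟩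

theorem alpha_eq_kappa_CFL_NeqK (F : Type*) [Field F] [Fintype F]
    (N : ℕ) (hN : 1 ≤ N) (d : Fin N → Fin N) :
    alphaCFL F d = kappaCFL F d ∧
    (numDistinct d ≤ N - 1 → alphaCFL F d = N * numDistinct d) ∧
    (numDistinct d = N → alphaCFL F d = N * (N - 1)) :=
  alpha_eq_kappa_CFL_NeqK_general F N hN d
end

section
/- If the demand d : [N] → [N] is a bijection (i.e., N_e(d) = N), then the generalized independence number satisfies α(d) ≥ N(N−1). -/
open Matrix

/-! The matrices whose column sums all vanish form the kernel of the column-sum map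
`M_N → F^N`, a subspace of dimension at least `N² - N`. A nonzero such `Z` has an entry
`Z a b ≠ 0`; as `d` is onto, some user `i` requests file `a`, and then `Z ∈ Z^{(i,b)}(d)`. -/

open Module

theorem LinearMap.finrank_sub_finrank_le_finrank_ker {K V W : Type*} [DivisionRing K]
    [AddCommGroup V] [Module K V] [AddCommGroup W] [Module K W]
    [FiniteDimensional K V] [FiniteDimensional K W] (f : V →ₗ[K] W) :
    finrank K V - finrank K W ≤ finrank K (ker f) := by
  have := f.finrank_range_add_finrank_ker
  have := (range f).finrank_le
  omega

def Matrix.colSums (R m n : Type*) [CommSemiring R] [Fintype m] :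
    Matrix m n R →ₗ[R] n → R where
  toFun Z j := ∑ a, Z a j
  map_add' Z Z' := by ext j; simp only [add_apply, Finset.sum_add_distrib, Pi.add_apply]
  map_smul' c Z := by ext j; simp only [smul_apply, smul_eq_mul, ← Finset.mul_sum]; rfl

theorem Matrix.card_mul_sub_card_le_finrank_ker_colSums (K m n : Type*) [Field K]
    [Fintype m] [Fintype n] :
    Fintype.card m * Fintype.card n - Fintype.card n ≤
      finrank K (LinearMap.ker (colSums K m n)) := by
  simpa only [finrank_matrix, finrank_self, mul_one, finrank_fintype_fun_eq_card]
    using (colSums K m n).finrank_sub_finrank_le_finrank_ker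

theorem finrank_le_alphaCFL {F : Type*} [Field F] {N : ℕ} {d : Fin N → Fin N}
    (U : Submodule F (Matrix (Fin N) (Fin N) F))
    (hU : ∀ x ∈ U, x ≠ 0 → x ∈ ⋃ i, ⋃ j, Zset F d i j) :
    finrank F U ≤ alphaCFL F d := by
  refine le_csSup ⟨finrank F (Matrix (Fin N) (Fin N) F), ?_⟩ ⟨U, hU, rfl⟩
  rintro k ⟨V, -, rfl⟩
  exact V.finrank_le

theorem mem_iUnion_Zset_of_colSums_eq_zero {F : Type*} [Field F] {N : ℕ} {d : Fin N → Fin N}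
    (hd : Function.Surjective d) {Z : Matrix (Fin N) (Fin N) F}
    (hZ : colSums F (Fin N) (Fin N) Z = 0) (hZ0 : Z ≠ 0) :
    Z ∈ ⋃ i, ⋃ j, Zset F d i j := by
  obtain ⟨a, b, hab⟩ : ∃ a b, Z a b ≠ 0 := by
    by_contra! h
    exact hZ0 (Matrix.ext h)
  obtain ⟨i, rfl⟩ := hd a
  exact Set.mem_iUnion₂.2 ⟨i, b, congrFun hZ i, hab⟩

theorem alpha_ge_of_bijective_general (F : Type*) [Field F]
    (N : ℕ) (d : Fin N → Fin N) (hd : Function.Bijective d) :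
    N * (N - 1) ≤ alphaCFL F d := by
  calc N * (N - 1) = N * N - N := by rw [Nat.mul_sub_one]
    _ ≤ finrank F (LinearMap.ker (colSums F (Fin N) (Fin N))) := by
      simpa only [Fintype.card_fin]
        using card_mul_sub_card_le_finrank_ker_colSums F (Fin N) (Fin N)
    _ ≤ alphaCFL F d := finrank_le_alphaCFL _ fun _ hZ hZ0 =>
      mem_iUnion_Zset_of_colSums_eq_zero hd.2 hZ hZ0

theorem alpha_ge_of_bijective (F : Type*) [Field F] [Fintype F]
    (N : ℕ) (hN : 1 ≤ N) (d : Fin N → Fin N) (hd : Function.Bijective d) :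
    N * (N - 1) ≤ alphaCFL F d :=
  alpha_ge_of_bijective_general F N d hd
end

section
/- For every integer N ≥ 1 and every demand d : [N] → [N], the min-rank satisfies κ(d) ≤ N·N_e(d) if N_e(d) ≤ N−1, and κ(d) ≤ N(N−1) if N_e(d) = N. Equivalently, there is a choice of scalars c : [N]×[N] → F_q for which the span of the matrices E_{d(i),j} + c(i,j)·v_i has dimension at most the stated bound. -/
open Matrix

/-!
With `c = 0` the matrices `E_{d(i),j}` span at most the `N · N_e(d)` matrix units whose row is a
demanded file. When `d` is a permutation, the choice `c(i,j) = -[i = j]` puts every generator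
`E_{d(i),j} + c(i,j) v_i` into the kernel of the surjection `Z ↦ (Z (d j) j)_j` onto `F^N`,
whose kernel has dimension `N² - N`.
-/

section

variable {F : Type*} [Field F] {N : ℕ}

variable (F) in
def codeSpan (d : Fin N → Fin N) (c : Fin N × Fin N → F) :
    Submodule F (Matrix (Fin N) (Fin N) F) :=
  Submodule.span F
    (Set.range fun p : Fin N × Fin N => single (d p.1) p.2 (1 : F) + c p • vmat F p.1)

theorem kappaCFL_le_finrank_codeSpan (d : Fin N → Fin N) (c : Fin N × Fin N → F) :
    kappaCFL F d ≤ Module.finrank F (codeSpan F d c) :=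
  Nat.sInf_le ⟨c, rfl⟩

theorem finrank_codeSpan_zero_le (d : Fin N → Fin N) :
    Module.finrank F (codeSpan F d 0) ≤ N * numDistinct d := by
  classical
  let matUnit : (Finset.univ.image d) × Fin N → Matrix (Fin N) (Fin N) F :=
    fun q => single q.1 q.2 1
  have hsub : codeSpan F d 0 ≤ Submodule.span F (Set.range matUnit) := by
    refine Submodule.span_mono ?_
    rintro _ ⟨⟨i, j⟩, rfl⟩
    exact ⟨(⟨d i, Finset.mem_image_of_mem d (Finset.mem_univ i)⟩, j), by simp [matUnit]⟩
  calc Module.finrank F (codeSpan F d 0)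
      ≤ Module.finrank F (Submodule.span F (Set.range matUnit)) := Submodule.finrank_mono hsub
    _ ≤ Fintype.card ((Finset.univ.image d) × Fin N) := finrank_range_le_card matUnit
    _ = N * numDistinct d := by
        simp only [Fintype.card_prod, Fintype.card_coe, Fintype.card_fin, numDistinct, Nat.mul_comm]

variable (F) in
def demandedEntries (d : Fin N → Fin N) :
    Matrix (Fin N) (Fin N) F →ₗ[F] Fin N → F where
  toFun Z j := Z (d j) j
  map_add' _ _ := rfl
  map_smul' _ _ := rfl

@[simp]
theorem demandedEntries_apply (d : Fin N → Fin N) (Z : Matrix (Fin N) (Fin N) F) (j : Fin N) :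
    demandedEntries F d Z j = Z (d j) j :=
  rfl

theorem demandedEntries_surjective (d : Fin N → Fin N) :
    Function.Surjective (demandedEntries F d) :=
  fun w => ⟨of fun _ b => w b, rfl⟩

theorem finrank_ker_demandedEntries (d : Fin N → Fin N) :
    Module.finrank F (LinearMap.ker (demandedEntries F d)) = N * (N - 1) := by
  have hrank := LinearMap.finrank_range_add_finrank_ker (demandedEntries F d)
  rw [LinearMap.range_eq_top.mpr (demandedEntries_surjective d), finrank_top,
    Module.finrank_fin_fun, Module.finrank_matrix, Module.finrank_self, Fintype.card_fin] at hrank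
  rw [Nat.mul_sub_one]
  omega

variable (F N) in
def negDiag : Fin N × Fin N → F :=
  fun p => if p.2 = p.1 then -1 else 0

theorem codeSpan_negDiag_le_ker {d : Fin N → Fin N} (hd : Function.Injective d) :
    codeSpan F d (negDiag F N) ≤ LinearMap.ker (demandedEntries F d) := by
  rw [codeSpan, Submodule.span_le]
  rintro _ ⟨⟨i, j⟩, rfl⟩
  rw [SetLike.mem_coe, LinearMap.mem_ker]
  funext k
  simp only [demandedEntries_apply, Pi.zero_apply, Matrix.add_apply, Matrix.smul_apply,
    single_apply, vmat, negDiag, hd.eq_iff, smul_eq_mul]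
  split_ifs <;> simp_all

theorem finrank_codeSpan_negDiag_le {d : Fin N → Fin N} (hd : Function.Injective d) :
    Module.finrank F (codeSpan F d (negDiag F N)) ≤ N * (N - 1) :=
  finrank_ker_demandedEntries (F := F) d ▸ Submodule.finrank_mono (codeSpan_negDiag_le_ker hd)

end

theorem injective_of_numDistinct_eq {K N : ℕ} {d : Fin K → Fin N}
    (h : numDistinct d = K) : Function.Injective d := by
  classical
  rw [← Set.injOn_univ, ← Finset.coe_univ, ← Finset.card_image_iff]
  simpa [numDistinct] using h

theorem kappa_le_CFL_NeqK_general (F : Type*) [Field F]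
    (N : ℕ) (d : Fin N → Fin N) :
    (numDistinct d ≤ N - 1 → kappaCFL F d ≤ N * numDistinct d) ∧
    (numDistinct d = N → kappaCFL F d ≤ N * (N - 1)) :=
  ⟨fun _ => (kappaCFL_le_finrank_codeSpan d 0).trans (finrank_codeSpan_zero_le d),
   fun hNe => (kappaCFL_le_finrank_codeSpan d _).trans
     (finrank_codeSpan_negDiag_le (injective_of_numDistinct_eq hNe))⟩

theorem kappa_le_CFL_NeqK (F : Type*) [Field F] [Fintype F]
    (N : ℕ) (hN : 1 ≤ N) (d : Fin N → Fin N) :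
    (numDistinct d ≤ N - 1 → kappaCFL F d ≤ N * numDistinct d) ∧
    (numDistinct d = N → kappaCFL F d ≤ N * (N - 1)) :=
  kappa_le_CFL_NeqK_general F N d
end

section
/- Let d : [N] → [N] be a demand with N_e(d) ≤ N−1, let D ⊆ [N] be the range of d, and fix u₀ ∈ [N]\D. Let S be the set of matrices M ∈ M_N such that every column of M sums to zero and every row of M with index in [N]\(D ∪ {u₀}) is zero. Then every nonzero element of S lies in ∪_{i,j} Z^{(i,j)}(d); in particular, for each nonzero M ∈ S there exist i,j ∈ [N] with M(d(i),j) ≠ 0. -/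
open Matrix

section ZeroSum

variable {ι R : Type*} [Fintype ι] [AddCommMonoid R]

theorem exists_ne_ne_zero_of_sum_eq_zero {v : ι → R} (hsum : ∑ a, v a = 0) {u : ι}
    (hu : v u ≠ 0) : ∃ a ≠ u, v a ≠ 0 := by
  by_contra! h
  exact hu (by rwa [Fintype.sum_eq_single u h] at hsum)

theorem exists_mem_ne_zero_of_sum_eq_zero {v : ι → R} (hsum : ∑ a, v a = 0) (hv : v ≠ 0)
    {S : Set ι} {u : ι} (hsupp : ∀ a ∉ S, a ≠ u → v a = 0) : ∃ a ∈ S, v a ≠ 0 := by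
  have mem_of_ne {a : ι} (ha : a ≠ u) (hva : v a ≠ 0) : a ∈ S := by
    by_contra haS
    exact hva (hsupp a haS ha)
  obtain ⟨a, ha⟩ := Function.ne_iff.mp hv
  by_cases hau : a = u
  · obtain ⟨a', ha'u, ha'⟩ := exists_ne_ne_zero_of_sum_eq_zero hsum (hau ▸ ha)
    exact ⟨a', mem_of_ne ha'u ha', ha'⟩
  · exact ⟨a, mem_of_ne hau ha, ha⟩

end ZeroSum

theorem span_subset_Zunion_general (F : Type*) [Field F]
    (N : ℕ) (d : Fin N → Fin N)
    (u₀ : Fin N) :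
    ∀ M : Matrix (Fin N) (Fin N) F,
      (∀ j, ∑ a, M a j = 0) →
      (∀ a, a ∉ Set.range d → a ≠ u₀ → ∀ b, M a b = 0) →
      M ≠ 0 →
      (M ∈ ⋃ i, ⋃ j, Zset F d i j) ∧ ∃ i j, M (d i) j ≠ 0 := by
  intro M hcol hrow hM
  obtain ⟨j, hj⟩ : ∃ j, (fun a => M a j) ≠ 0 := by
    by_contra! h
    exact hM (Matrix.ext fun a j => congrFun (h j) a)
  obtain ⟨_, ⟨i, rfl⟩, hij⟩ :=
    exists_mem_ne_zero_of_sum_eq_zero (hcol j) hj fun a ha hau => hrow a ha hau j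
  exact ⟨Set.mem_iUnion₂.mpr ⟨i, j, hcol i, hij⟩, i, j, hij⟩

theorem span_subset_Zunion (F : Type*) [Field F] [Fintype F]
    (N : ℕ) (hN : 1 ≤ N) (d : Fin N → Fin N) (hd : numDistinct d ≤ N - 1)
    (u₀ : Fin N) (hu : u₀ ∉ Set.range d) :
    ∀ M : Matrix (Fin N) (Fin N) F,
      (∀ j, ∑ a, M a j = 0) →
      (∀ a, a ∉ Set.range d → a ≠ u₀ → ∀ b, M a b = 0) →
      M ≠ 0 →
      (M ∈ ⋃ i, ⋃ j, Zset F d i j) ∧ ∃ i j, M (d i) j ≠ 0 :=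
  span_subset_Zunion_general F N d u₀
end

section
/- For every integer N ≥ 1, every demand d : [N] → [N], and every integer δ ≥ 0, the smallest length ℓ for which there exists a linear δ-error-correcting delivery code of length ℓ for I(M_CFL, d) equals N_q[κ*, 2δ+1], where κ* = N·N_e(d) if N_e(d) ≤ N−1 and κ* = N(N−1) if N_e(d) = N. -/
open Matrix

/-- `E` is a linear `δ`-error-correcting delivery code of length `ℓ` for the GIC
problem `I(M_CFL, d)` induced by CFL prefetching with `N` files and `K = N` users:
receiver `(i,j)` knows the coded packet `∑_a X(a,i)` and, from any received word
within Hamming distance `δ` of `E(X)`, must recover `X(d(i), j)`. -/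
def IsECDeliveryCode (F : Type*) [Field F] [DecidableEq F] {N : ℕ}
    (d : Fin N → Fin N) (δ ℓ : ℕ)
    (E : Matrix (Fin N) (Fin N) F →ₗ[F] (Fin ℓ → F)) : Prop :=
  ∀ i j : Fin N, ∃ Dec : (Fin ℓ → F) → F → F,
    ∀ X : Matrix (Fin N) (Fin N) F, ∀ y : Fin ℓ → F,
      hammingDist y (E X) ≤ δ → Dec y (∑ a, X a i) = X (d i) j

/-- The smallest length of a linear `δ`-error-correcting delivery code for
`I(M_CFL, d)`. -/
noncomputable def optLen (F : Type*) [Field F] [DecidableEq F] {N : ℕ}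
    (d : Fin N → Fin N) (δ : ℕ) : ℕ :=
  sInf { ℓ | ∃ E : Matrix (Fin N) (Fin N) F →ₗ[F] (Fin ℓ → F),
    IsECDeliveryCode F d δ ℓ E }

/-- `N_q[k, d']`: the smallest length `n` of a `k`-dimensional linear code over `F`
whose distinct codewords are at Hamming distance at least `d'` from each other. -/
noncomputable def shortestCodeLen (F : Type*) [Field F] [DecidableEq F] (k d' : ℕ) : ℕ :=
  sInf { n | ∃ C : Submodule F (Fin n → F), Module.finrank F C = k ∧
    ∀ x ∈ C, ∀ y ∈ C, x ≠ y → d' ≤ hammingDist x y }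

/-!
Both sides are governed by a set `S` of entries `(a, j)` of the message matrix: all entries of
the demanded files when some file is not demanded, and all entries with `a ≠ d j` when `d` is a
bijection. Sending `X` restricted to `S` through a code of dimension `|S|` and minimum distance
`2δ + 1` suffices: after nearest-codeword decoding, receiver `(i, j)` either reads `X (d i) j` or,
when `j = i`, subtracts the other entries of column `i` from its cached column sum. Conversely,
each column has a row `ρ j` outside `S`; correcting there turns any `w : S → F` into a message
with zero column sums. All such messages look alike to every receiver, yet two of them differ at a
demanded entry whenever the `w`s differ, so a `δ`-error-correcting delivery code must map them to
words at distance at least `2δ + 1`: its image is a code of dimension `|S|`. Hence the admissible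
lengths of delivery codes and of such codes are the same.
-/

section Hamming

variable {ι : Type*} {β : ι → Type*} [Fintype ι] [∀ i, DecidableEq (β i)]

theorem exists_hammingDist_le_of_hammingDist_le_add {x z : ∀ i, β i} {a b : ℕ}
    (h : hammingDist x z ≤ a + b) : ∃ y, hammingDist x y ≤ a ∧ hammingDist y z ≤ b := by
  classical
  set D := Finset.univ.filter fun i => x i ≠ z i
  obtain ⟨t, htD, ht⟩ := Finset.exists_subset_card_eq (min_le_right a D.card)
  refine ⟨fun i => if i ∈ t then z i else x i, ?_, ?_⟩
  · calc hammingDist x _ ≤ t.card := Finset.card_le_card fun i hi => by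
          by_contra hit
          simp [hit] at hi
      _ ≤ a := ht ▸ min_le_left _ _
  · calc hammingDist _ z ≤ (D \ t).card := Finset.card_le_card fun i hi => by
          by_cases hit : i ∈ t <;> simp_all [D]
      _ ≤ b := by
          rw [Finset.card_sdiff_of_subset htD, ht]
          have hD : D.card = hammingDist x z := rfl
          omega

theorem le_hammingDist_of_decodes {α σ τ : Type*} {E : α → ∀ i, β i} {side : α → σ}
    {demand : α → τ} {δ : ℕ} (dec : (∀ i, β i) → σ → τ)
    (hdec : ∀ X y, hammingDist y (E X) ≤ δ → dec y (side X) = demand X) {X X' : α}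
    (hside : side X = side X') (hdemand : demand X ≠ demand X') :
    2 * δ + 1 ≤ hammingDist (E X) (E X') := by
  by_contra! h
  obtain ⟨y, hXy, hyX'⟩ := exists_hammingDist_le_of_hammingDist_le_add (a := δ) (b := δ)
    (by omega : hammingDist (E X) (E X') ≤ δ + δ)
  rw [hammingDist_comm] at hXy
  exact hdemand (by rw [← hdec X y hXy, hside, hdec X' y hyX'])

theorem eq_of_hammingDist_le_of_hammingDist_le {α : Type*} {G : α → ∀ i, β i} {δ : ℕ}
    (hG : ∀ v v', v ≠ v' → 2 * δ + 1 ≤ hammingDist (G v) (G v')) {y : ∀ i, β i} {v v' : α}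
    (hv : hammingDist y (G v) ≤ δ) (hv' : hammingDist y (G v') ≤ δ) : v = v' := by
  by_contra hne
  have := hammingDist_triangle (G v) y (G v')
  rw [hammingDist_comm (G v) y] at this
  have := hG v v' hne
  omega

end Hamming

theorem exists_submodule_finrank_eq_of_le_hammingDist {F V ι : Type*} [Field F] [DecidableEq F]
    [AddCommGroup V] [Module F V] [Fintype ι] (T : V →ₗ[F] ι → F) {k : ℕ} (hk : 1 ≤ k)
    (hT : ∀ v v', v ≠ v' → k ≤ hammingDist (T v) (T v')) :
    ∃ C : Submodule F (ι → F), Module.finrank F C = Module.finrank F V ∧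
      ∀ x ∈ C, ∀ y ∈ C, x ≠ y → k ≤ hammingDist x y := by
  have hinj : Function.Injective T := fun v v' h => by
    by_contra hne
    have := hT v v' hne
    rw [h, hammingDist_self] at this
    omega
  refine ⟨LinearMap.range T, LinearMap.finrank_range_of_inj hinj, ?_⟩
  rintro _ ⟨v, rfl⟩ _ ⟨v', rfl⟩ hne
  exact hT v v' (ne_of_apply_ne T hne)

namespace Matrix

variable {F : Type*} [Field F] {m n : Type*} [DecidableEq m] [DecidableEq n]
  (S : Finset (m × n))

def restrictEntries : Matrix m n F →ₗ[F] (S → F) where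
  toFun X p := X p.1.1 p.1.2
  map_add' _ _ := rfl
  map_smul' _ _ := rfl

def extendEntries : (S → F) →ₗ[F] Matrix m n F where
  toFun w := of fun a j => if h : (a, j) ∈ S then w ⟨(a, j), h⟩ else 0
  map_add' w w' := by
    ext a j
    simp only [of_apply, add_apply]
    split_ifs <;> simp
  map_smul' c w := by
    ext a j
    simp only [of_apply, smul_apply]
    split_ifs <;> simp

theorem extendEntries_apply_of_mem (w : S → F) {a : m} {j : n} (h : (a, j) ∈ S) :
    extendEntries S w a j = w ⟨(a, j), h⟩ :=
  dif_pos h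

variable [Fintype m]

def balancedLift (ρ : n → m) : (S → F) →ₗ[F] Matrix m n F where
  toFun w := of fun a j =>
    extendEntries S w a j - if a = ρ j then ∑ b, extendEntries S w b j else 0
  map_add' w w' := by
    ext a j
    simp only [map_add, of_apply, add_apply, Finset.sum_add_distrib]
    split_ifs <;> ring
  map_smul' c w := by
    ext a j
    simp only [map_smul, of_apply, smul_apply, smul_eq_mul, ← Finset.mul_sum, RingHom.id_apply]
    split_ifs <;> ring

theorem balancedLift_apply_of_mem {ρ : n → m} (hρ : ∀ j, (ρ j, j) ∉ S) (w : S → F)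
    {a : m} {j : n} (h : (a, j) ∈ S) : balancedLift S ρ w a j = w ⟨(a, j), h⟩ := by
  have : a ≠ ρ j := fun ha => hρ j (ha ▸ h)
  simp [balancedLift, extendEntries_apply_of_mem S w h, this]

theorem sum_balancedLift_eq_zero (ρ : n → m) (w : S → F) (j : n) :
    ∑ a, balancedLift S ρ w a j = 0 := by
  simp [balancedLift, Finset.sum_sub_distrib]

end Matrix

open Matrix

section Delivery

variable {F : Type*} [Field F] {N : ℕ} {d : Fin N → Fin N} {δ : ℕ}
  (S : Finset (Fin N × Fin N))

theorem exists_decoder_restrictEntries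
    (hcov : ∀ i j, (d i, j) ∈ S ∨ (j = i ∧ ∀ a, a ≠ d i → (a, i) ∈ S)) (i j : Fin N) :
    ∃ f : (S → F) → F → F, ∀ X, f (restrictEntries S X) (∑ a, X a i) = X (d i) j := by
  rcases hcov i j with hmem | ⟨hji, hcol⟩
  · exact ⟨fun w _ => w ⟨_, hmem⟩, fun X => rfl⟩
  rw [hji]
  refine ⟨fun w s => s - ∑ a ∈ Finset.univ.erase (d i), extendEntries S w a i, fun X => ?_⟩
  have hrest : ∑ a ∈ Finset.univ.erase (d i), extendEntries S (restrictEntries S X) a i =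
      ∑ a ∈ Finset.univ.erase (d i), X a i :=
    Finset.sum_congr rfl fun a ha =>
      extendEntries_apply_of_mem S _ (hcol a (Finset.ne_of_mem_erase ha))
  dsimp only
  rw [hrest, ← Finset.add_sum_erase _ _ (Finset.mem_univ (d i)), add_sub_cancel_right]

variable [DecidableEq F]

theorem isECDeliveryCode_comp {n : ℕ} {V : Type*} [AddCommGroup V] [Module F V]
    (L : Matrix (Fin N) (Fin N) F →ₗ[F] V)
    (hL : ∀ i j, ∃ f : V → F → F, ∀ X, f (L X) (∑ a, X a i) = X (d i) j)
    (G : V →ₗ[F] (Fin n → F)) (hG : ∀ v v', v ≠ v' → 2 * δ + 1 ≤ hammingDist (G v) (G v')) :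
    IsECDeliveryCode F d δ n (G ∘ₗ L) := by
  intro i j
  obtain ⟨f, hf⟩ := hL i j
  refine ⟨fun y s => f (Classical.epsilon fun v => hammingDist y (G v) ≤ δ) s, fun X y hy => ?_⟩
  have hdecode : (Classical.epsilon fun v => hammingDist y (G v) ≤ δ) = L X :=
    eq_of_hammingDist_le_of_hammingDist_le hG
      (Classical.epsilon_spec (p := fun v => hammingDist y (G v) ≤ δ) ⟨L X, hy⟩) hy
  dsimp only
  rw [hdecode, hf]

theorem exists_isECDeliveryCode_of_code
    (hcov : ∀ i j, (d i, j) ∈ S ∨ (j = i ∧ ∀ a, a ≠ d i → (a, i) ∈ S)) {n : ℕ}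
    (C : Submodule F (Fin n → F)) (hC : Module.finrank F C = S.card)
    (hdist : ∀ x ∈ C, ∀ y ∈ C, x ≠ y → 2 * δ + 1 ≤ hammingDist x y) :
    ∃ E, IsECDeliveryCode F d δ n E := by
  let G : (S → F) ≃ₗ[F] C := LinearEquiv.ofFinrankEq _ _ <| by
    rw [Module.finrank_fintype_fun_eq_card, Fintype.card_coe, hC]
  refine ⟨(C.subtype ∘ₗ G.toLinearMap) ∘ₗ restrictEntries S,
    isECDeliveryCode_comp _ (exists_decoder_restrictEntries S hcov) _ fun v v' hne => ?_⟩
  exact hdist _ (G v).2 _ (G v').2 fun h => hne (G.injective (Subtype.ext h))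

theorem exists_code_of_isECDeliveryCode (hdem : ∀ p ∈ S, p.1 ∈ Set.range d)
    (hfree : ∀ j, ∃ a, (a, j) ∉ S) {ℓ : ℕ} {E : Matrix (Fin N) (Fin N) F →ₗ[F] (Fin ℓ → F)}
    (hE : IsECDeliveryCode F d δ ℓ E) :
    ∃ C : Submodule F (Fin ℓ → F), Module.finrank F C = S.card ∧
      ∀ x ∈ C, ∀ y ∈ C, x ≠ y → 2 * δ + 1 ≤ hammingDist x y := by
  choose ρ hρ using hfree
  obtain ⟨C, hC, hdist⟩ := exists_submodule_finrank_eq_of_le_hammingDist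
    (E ∘ₗ balancedLift S ρ) (k := 2 * δ + 1) (by omega) fun w w' hne => by
      obtain ⟨⟨⟨a, j⟩, hmem⟩, hww'⟩ := Function.ne_iff.mp hne
      obtain ⟨i, rfl⟩ := hdem _ hmem
      obtain ⟨dec, hdec⟩ := hE i j
      refine le_hammingDist_of_decodes (side := fun X : Matrix (Fin N) (Fin N) F => ∑ a, X a i)
        (demand := fun X => X (d i) j) dec hdec ?_ ?_
      · simp only [sum_balancedLift_eq_zero]
      · simpa only [balancedLift_apply_of_mem S hρ _ hmem] using hww'
  refine ⟨C, ?_, hdist⟩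
  rw [hC, Module.finrank_fintype_fun_eq_card, Fintype.card_coe]

theorem optLen_eq_shortestCodeLen_card (hdem : ∀ p ∈ S, p.1 ∈ Set.range d)
    (hfree : ∀ j, ∃ a, (a, j) ∉ S)
    (hcov : ∀ i j, (d i, j) ∈ S ∨ (j = i ∧ ∀ a, a ≠ d i → (a, i) ∈ S)) :
    optLen F d δ = shortestCodeLen F S.card (2 * δ + 1) := by
  unfold optLen shortestCodeLen
  congr 1
  ext n
  exact ⟨fun ⟨_, hE⟩ => exists_code_of_isECDeliveryCode S hdem hfree hE,
    fun ⟨C, hC, hdist⟩ => exists_isECDeliveryCode_of_code S hcov C hC hdist⟩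

variable (F δ)

theorem optLen_eq_of_numDistinct_le (h : numDistinct d ≤ N - 1) :
    optLen F d δ = shortestCodeLen F (N * numDistinct d) (2 * δ + 1) := by
  have hcard :
      (Finset.univ.image d ×ˢ (Finset.univ : Finset (Fin N))).card = N * numDistinct d := by
    rw [Finset.card_product, Finset.card_univ, Fintype.card_fin, mul_comm]
    rfl
  rw [← hcard]
  refine optLen_eq_shortestCodeLen_card _ (fun p hp => by simpa using hp) (fun j => ?_)
    (fun i j => Or.inl (by simp))
  obtain ⟨a, -, ha⟩ := Finset.exists_mem_notMem_of_card_lt_card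
    (s := Finset.univ.image d) (t := (Finset.univ : Finset (Fin N))) <| by
      rw [Finset.card_univ, Fintype.card_fin]
      have := j.pos
      exact lt_of_le_of_lt h (by omega)
  exact ⟨a, by simpa using ha⟩

theorem optLen_eq_of_injective (hd : Function.Injective d) :
    optLen F d δ = shortestCodeLen F (N * (N - 1)) (2 * δ + 1) := by
  set S := (Finset.univ.image fun j => (d j, j))ᶜ
  have hS : ∀ a j, (a, j) ∈ S ↔ a ≠ d j := by simp [S, eq_comm]
  have hcard : S.card = N * (N - 1) := by
    rw [Finset.card_compl, Finset.card_image_of_injective _ fun j j' h => (Prod.ext_iff.1 h).2]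
    simp [Nat.mul_sub_one]
  rw [← hcard]
  refine optLen_eq_shortestCodeLen_card _ (fun p _ => Finite.surjective_of_injective hd p.1)
    (fun j => ⟨d j, by simp [hS]⟩) (fun i j => ?_)
  by_cases hij : d i = d j
  · obtain rfl := hd hij
    exact Or.inr ⟨rfl, fun a ha => (hS a i).2 ha⟩
  · exact Or.inl ((hS _ _).2 hij)

end Delivery

theorem optLen_eq_CFL_NeqK_general (F : Type*) [Field F] [DecidableEq F]
    (N : ℕ) (d : Fin N → Fin N) (δ : ℕ) :
    (numDistinct d ≤ N - 1 →
      optLen F d δ = shortestCodeLen F (N * numDistinct d) (2 * δ + 1)) ∧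
    (numDistinct d = N →
      optLen F d δ = shortestCodeLen F (N * (N - 1)) (2 * δ + 1)) := by
  refine ⟨optLen_eq_of_numDistinct_le F δ, fun h => optLen_eq_of_injective F δ ?_⟩
  rw [← Set.injOn_univ, ← Finset.coe_univ, ← Finset.card_image_iff, Finset.card_univ,
    Fintype.card_fin]
  exact h

theorem optLen_eq_CFL_NeqK (F : Type*) [Field F] [Fintype F] [DecidableEq F]
    (N : ℕ) (hN : 1 ≤ N) (d : Fin N → Fin N) (δ : ℕ) :
    (numDistinct d ≤ N - 1 →
      optLen F d δ = shortestCodeLen F (N * numDistinct d) (2 * δ + 1)) ∧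
    (numDistinct d = N →
      optLen F d δ = shortestCodeLen F (N * (N - 1)) (2 * δ + 1)) :=
  optLen_eq_CFL_NeqK_general F N d δ
end
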